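/- arXiv:2111.14073 — 3 statements merged into one kernel-verified Lean document; each statement's English description precedes it below -/
import Mathlib

section
/- Let F be a field, let α1, α2, α3 ∈ F be pairwise distinct, and let x, x1, x2, x3, x12, x13, x23, x123 ∈ F satisfy: (x−x12)(x1−x2) = α1−α2, (x−x13)(x1−x3) = α1−α3, (x−x23)(x2−x3) = α2−α3, (x1−x123)(x12−x13) = α2−α3, and (x2−x123)(x12−x23) = α1−α3. Then (x3−x123)(x13−x23) = α1−α2. -/
theorem stmt6 {F : Type*} [Field F] (α1 α2 α3 : F)
    (h12 : α1 ≠ α2) (h13 : α1 ≠ α3) (h23 : α2 ≠ α3)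
    (x x1 x2 x3 x12 x13 x23 x123 : F)
    (e1 : (x - x12)*(x1 - x2) = α1 - α2)
    (e2 : (x - x13)*(x1 - x3) = α1 - α3)
    (e3 : (x - x23)*(x2 - x3) = α2 - α3)
    (e4 : (x1 - x123)*(x12 - x13) = α2 - α3)
    (e5 : (x2 - x123)*(x12 - x23) = α1 - α3) :
    (x3 - x123)*(x13 - x23) = α1 - α2 := by
  have d13 : α1 - α3 ≠ 0 := sub_ne_zero.mpr h13
  have d23 : α2 - α3 ≠ 0 := sub_ne_zero.mpr h23
  have n2 : x1 - x3 ≠ 0 := right_ne_zero_of_mul (e2 ▸ d13)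
  have n3 : x2 - x3 ≠ 0 := right_ne_zero_of_mul (e3 ▸ d23)
  set D : F := (α1 - α3)*(x1 - x2) - (α1 - α2)*(x1 - x3) with hDdef
  have hD1 : (x12 - x13) * ((x1 - x2)*(x1 - x3)) = D := by
    rw [hDdef]; linear_combination (x1 - x2)*e2 - (x1 - x3)*e1
  have h1323 : (x13 - x23) * ((x1 - x3)*(x2 - x3)) = D := by
    rw [hDdef]; linear_combination (x1 - x3)*e3 - (x2 - x3)*e2
  have h4' : (x1 - x123) * D = (α2 - α3)*((x1 - x2)*(x1 - x3)) := by
    linear_combination (x1 - x2)*(x1 - x3)*e4 - (x1 - x123)*hD1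
  have h3 : (x3 - x123) * D = (α1 - α2)*((x1 - x3)*(x2 - x3)) := by
    rw [hDdef] at h4' ⊢; linear_combination h4'
  have key : (x3 - x123)*(x13 - x23) * ((x1 - x3)*(x2 - x3))
      = (α1 - α2) * ((x1 - x3)*(x2 - x3)) := by
    linear_combination (x3 - x123)*h1323 + h3
  exact mul_right_cancel₀ (mul_ne_zero n2 n3) key
end

section
/- Let F be a field, let α1, α2, α3 ∈ F be pairwise distinct, and let x, x1, x2, x3, x12, x13, x23, x123 ∈ F satisfy all six cube-face equations of H1: (x−x12)(x1−x2) = α1−α2, (x−x13)(x1−x3) = α1−α3, (x−x23)(x2−x3) = α2−α3, (x1−x123)(x12−x13) = α2−α3, (x2−x123)(x12−x23) = α1−α3, and (x3−x123)(x13−x23) = α1−α2. Then (α3−α2)·(x123−x2)·(x1−x3) = (α3−α1)·(x123−x1)·(x2−x3). -/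
theorem stmt7 {F : Type*} [Field F] (α1 α2 α3 : F)
    (h12 : α1 ≠ α2) (h13 : α1 ≠ α3) (h23 : α2 ≠ α3)
    (x x1 x2 x3 x12 x13 x23 x123 : F)
    (e1 : (x - x12)*(x1 - x2) = α1 - α2)
    (e2 : (x - x13)*(x1 - x3) = α1 - α3)
    (e3 : (x - x23)*(x2 - x3) = α2 - α3)
    (e4 : (x1 - x123)*(x12 - x13) = α2 - α3)
    (e5 : (x2 - x123)*(x12 - x23) = α1 - α3)
    (e6 : (x3 - x123)*(x13 - x23) = α1 - α2) :
    (α3 - α2)*(x123 - x2)*(x1 - x3) = (α3 - α1)*(x123 - x1)*(x2 - x3) := by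
  have n12 : x1 - x2 ≠ 0 :=
    right_ne_zero_of_mul (e1 ▸ sub_ne_zero.mpr h12)
  have n13 : x1 - x3 ≠ 0 :=
    right_ne_zero_of_mul (e2 ▸ sub_ne_zero.mpr h13)
  have n23 : x2 - x3 ≠ 0 :=
    right_ne_zero_of_mul (e3 ▸ sub_ne_zero.mpr h23)
  have nf : x12 - x13 ≠ 0 :=
    right_ne_zero_of_mul (e4 ▸ sub_ne_zero.mpr h23)
  set D : F := α1*(x3-x2) + α2*(x1-x3) + α3*(x2-x1) with hDdef
  have hD : (x12 - x13) * ((x1-x2)*(x1-x3)) = D := by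
    rw [hDdef]; linear_combination (x1-x2)*e2 - (x1-x3)*e1
  have hD2 : (x12 - x23) * ((x1-x2)*(x2-x3)) = D := by
    rw [hDdef]; linear_combination (x1-x2)*e3 - (x2-x3)*e1
  have hDne : D ≠ 0 := hD ▸ mul_ne_zero nf (mul_ne_zero n12 n13)
  have hA : (x1 - x123) * D = (α2-α3)*((x1-x2)*(x1-x3)) := by
    linear_combination ((x1-x2)*(x1-x3))*e4 - (x1-x123)*hD
  have hB : (x2 - x123) * D = (α1-α3)*((x1-x2)*(x2-x3)) := by
    linear_combination ((x1-x2)*(x2-x3))*e5 - (x2-x123)*hD2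
  have key : ((α3 - α2)*(x123 - x2)*(x1 - x3)) * D
      = ((α3 - α1)*(x123 - x1)*(x2 - x3)) * D := by
    linear_combination (α3-α1)*(x2-x3)*hA - (α3-α2)*(x1-x3)*hB
  exact mul_right_cancel₀ hDne key
end

section
/- Let F be a field, let μ, α ∈ F with μ ≠ 0 and α ≠ 0, and let x, u, v, y ∈ F with x ≠ u. Suppose α·(x−v)·(u−y) − (μ²/α)·(x−u)·(v−y) = 0 and μ·(x−u) + α·(u−y) = 0. Then α²·(x−v) + α·μ·(v−u) − μ²·(x−u) = 0. -/
/-- On the boundary `α (u - y) = -μ (x - u)`, the quad polynomial `α² Q` factors through the dual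
boundary polynomial. -/
theorem mul_dual_boundary_eq_of_boundary {R : Type*} [CommRing R] {μ α x u v y : R}
    (hq : μ*(x-u) + α*(u-y) = 0) :
    μ*(x-u) * (α^2*(x-v) + α*μ*(v-u) - μ^2*(x-u)) =
      -α * (α^2*(x-v)*(u-y) - μ^2*(x-u)*(v-y)) := by
  linear_combination (α^2*(x-v) - μ^2*(x-u)) * hq

theorem stmt13 {F : Type*} [Field F] (μ α : F) (hμ : μ ≠ 0) (hα : α ≠ 0)
    (x u v y : F) (hxu : x ≠ u)
    (hQ : α*(x-v)*(u-y) - (μ^2/α)*(x-u)*(v-y) = 0)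
    (hq : μ*(x-u) + α*(u-y) = 0) :
    α^2*(x-v) + α*μ*(v-u) - μ^2*(x-u) = 0 := by
  have hQ' : α^2*(x-v)*(u-y) - μ^2*(x-u)*(v-y) = 0 := by
    rw [← mul_eq_zero_of_right α hQ]
    field_simp
  have hprod := mul_dual_boundary_eq_of_boundary (v := v) hq
  rw [hQ', mul_zero] at hprod
  exact (mul_eq_zero.mp hprod).resolve_left (mul_ne_zero hμ (sub_ne_zero.mpr hxu))
end
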